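/- Let X be locally compact Hausdorff second countable with countable basis {U_n} and compact exhaustions K_{mn} ⊆ int(K_{(m+1)n}) with ⋃_m K_{mn} = U_n, and let (Y,d) be a metric space with d ≤ 1. Then β(f,g) = Σ_{n,m} 2^{−(m+n)} β_{mn}(f,g) is a metric on C_od(X,Y), i.e., β(f,g) = 0 implies f = g. -/

import Mathlib

open Set Topology Filter

/-- A continuous partial function from `X` to `Y` with open domain. -/
structure Cod (X Y : Type*) [TopologicalSpace X] [TopologicalSpace Y] where
  dom : Set X
  toFun : dom → Y
  isOpen_dom : IsOpen dom
  continuous_toFun : Continuous toFun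

namespace Cod

variable {X Y : Type*} [TopologicalSpace X] [TopologicalSpace Y]

/-- The image of a subset of `X` under a partial function. -/
def image (f : Cod X Y) (K : Set X) : Set Y := f.toFun '' ((↑) ⁻¹' K)

/-- The empty partial function. -/
def empty (X Y : Type*) [TopologicalSpace X] [TopologicalSpace Y] : Cod X Y where
  dom := ∅
  toFun := fun x => absurd x.2 (Set.notMem_empty _)
  isOpen_dom := isOpen_empty
  continuous_toFun := by
    rw [continuous_iff_continuousAt]
    rintro ⟨x, hx⟩
    exact absurd hx (Set.notMem_empty x)

end Cod

/-- The compact-open topology on `Cod X Y`, generated by the sets `⟨K,V⟩`. -/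
def codCO (X Y : Type*) [TopologicalSpace X] [TopologicalSpace Y] : TopologicalSpace (Cod X Y) :=
  TopologicalSpace.generateFrom
    {S | ∃ (K : Set X) (V : Set Y), IsCompact K ∧ IsOpen V ∧
      S = {f : Cod X Y | K ⊆ f.dom ∧ f.image K ⊆ V}}

/-- `dK f g K = sup_{x ∈ K} d (f x) (g x)` (meaningful when `K ⊆ dom f ∩ dom g`). -/
noncomputable def dK {X Y : Type*} [TopologicalSpace X] [MetricSpace Y]
    (f g : Cod X Y) (K : Set X) : ℝ :=
  sSup {r | ∃ (x : X) (hf : x ∈ f.dom) (hg : x ∈ g.dom), x ∈ K ∧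
    r = dist (f.toFun ⟨x, hf⟩) (g.toFun ⟨x, hg⟩)}

open scoped Classical in
/-- The building block `β_{mn}`: here `W` plays the role of `int K_{(m+1)n}` and
`Kc` the role of `K_{mn}`. -/
noncomputable def beta0 {X Y : Type*} [TopologicalSpace X] [MetricSpace Y]
    (W Kc : Set X) (f g : Cod X Y) : ℝ :=
  if (f.domᶜ ∩ W).Nonempty then (if (g.domᶜ ∩ W).Nonempty then 0 else 1)
  else (if (g.domᶜ ∩ W).Nonempty then 1 else dK f g Kc)

/-- The metric `β(f,g) = Σ_{n,m} 2^{-(m+n)} β_{mn}(f,g)` (indices shifted to start at 0). -/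
noncomputable def beta {X Y : Type*} [TopologicalSpace X] [MetricSpace Y]
    (K : ℕ → ℕ → Set X) (f g : Cod X Y) : ℝ :=
  ∑' (n : ℕ) (m : ℕ), ((2 : ℝ) ^ (m + n + 2))⁻¹ *
    beta0 (interior (K (m + 1) n)) (K m n) f g

/-!
All terms of the series are nonnegative, so `β(f,g) = 0` forces every `β_{mn}(f,g)` to vanish.
Then `int K_{(m+1)n}` lies in `dom f` iff it lies in `dom g`; since every point of an open set
lies in some `K_{mn}` with `int K_{(m+1)n}` inside that set, the domains agree. On the open
set `dom f ∩ dom g` the same covering gives a `K_{mn}` on which `sup d(f x, g x) = 0`.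
-/

section Beta

variable {X Y : Type*} [TopologicalSpace X] [MetricSpace Y]

lemma dK_nonneg (f g : Cod X Y) (Kc : Set X) : 0 ≤ dK f g Kc :=
  Real.sSup_nonneg <| by
    rintro r ⟨x, hf, hg, -, rfl⟩
    exact dist_nonneg

lemma dK_le_one (hd : ∀ y₁ y₂ : Y, dist y₁ y₂ ≤ 1) (f g : Cod X Y) (Kc : Set X) :
    dK f g Kc ≤ 1 :=
  Real.sSup_le (by rintro r ⟨x, hf, hg, -, rfl⟩; exact hd _ _) zero_le_one

lemma dist_le_dK (hd : ∀ y₁ y₂ : Y, dist y₁ y₂ ≤ 1) (f g : Cod X Y) {Kc : Set X} {x : X}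
    (hx : x ∈ Kc) (hf : x ∈ f.dom) (hg : x ∈ g.dom) :
    dist (f.toFun ⟨x, hf⟩) (g.toFun ⟨x, hg⟩) ≤ dK f g Kc :=
  le_csSup ⟨1, by rintro r ⟨y, hyf, hyg, -, rfl⟩; exact hd _ _⟩ ⟨x, hf, hg, hx, rfl⟩

lemma beta0_nonneg (W Kc : Set X) (f g : Cod X Y) : 0 ≤ beta0 W Kc f g := by
  unfold beta0
  split_ifs <;> first | exact dK_nonneg f g Kc | norm_num

lemma beta0_le_one (hd : ∀ y₁ y₂ : Y, dist y₁ y₂ ≤ 1) (W Kc : Set X) (f g : Cod X Y) :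
    beta0 W Kc f g ≤ 1 := by
  unfold beta0
  split_ifs <;> first | exact dK_le_one hd f g Kc | norm_num

lemma subset_dom_iff_of_beta0_eq_zero {W Kc : Set X} {f g : Cod X Y}
    (h : beta0 W Kc f g = 0) : W ⊆ f.dom ↔ W ⊆ g.dom := by
  simp only [← sdiff_eq_empty, sdiff_eq_compl_inter, ← not_nonempty_iff_eq_empty]
  unfold beta0 at h
  split_ifs at h <;> simp_all

lemma dK_eq_zero_of_beta0_eq_zero {W Kc : Set X} {f g : Cod X Y}
    (h : beta0 W Kc f g = 0) (hf : W ⊆ f.dom) (hg : W ⊆ g.dom) : dK f g Kc = 0 := by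
  have hf' : ¬ (f.domᶜ ∩ W).Nonempty := fun ⟨x, hxf, hxW⟩ => hxf (hf hxW)
  have hg' : ¬ (g.domᶜ ∩ W).Nonempty := fun ⟨x, hxg, hxW⟩ => hxg (hg hxW)
  rwa [beta0, if_neg hf', if_neg hg'] at h

lemma eq_zero_of_tsum_tsum_eq_zero {a : ℕ → ℕ → ℝ} (h0 : ∀ n m, 0 ≤ a n m)
    (hs : Summable (Function.uncurry a)) (h : ∑' n, ∑' m, a n m = 0) (n m : ℕ) :
    a n m = 0 := by
  have hsum : HasSum (Function.uncurry a) 0 := hs.hasSum_iff.mpr (hs.tsum_prod.trans h)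
  exact congrFun ((hasSum_zero_iff_of_nonneg fun p => h0 p.1 p.2).mp hsum) (n, m)

lemma beta0_eq_zero_of_beta_eq_zero (hd : ∀ y₁ y₂ : Y, dist y₁ y₂ ≤ 1)
    {K : ℕ → ℕ → Set X} {f g : Cod X Y} (h : beta K f g = 0) (n m : ℕ) :
    beta0 (interior (K (m + 1) n)) (K m n) f g = 0 := by
  have h0 : ∀ n m, 0 ≤ ((2 : ℝ) ^ (m + n + 2))⁻¹ *
      beta0 (interior (K (m + 1) n)) (K m n) f g := fun n m =>
    mul_nonneg (by positivity) (beta0_nonneg _ _ _ _)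
  have hgeom : Summable fun p : ℕ × ℕ => (1 / 2 : ℝ) ^ p.1 * (1 / 2) ^ p.2 :=
    summable_geometric_two.mul_of_nonneg summable_geometric_two
      (fun _ => by positivity) (fun _ => by positivity)
  have hs : Summable fun p : ℕ × ℕ => ((2 : ℝ) ^ (p.2 + p.1 + 2))⁻¹ *
      beta0 (interior (K (p.2 + 1) p.1)) (K p.2 p.1) f g := by
    refine hgeom.of_nonneg_of_le (fun p => h0 p.1 p.2) fun p => ?_
    calc ((2 : ℝ) ^ (p.2 + p.1 + 2))⁻¹ * beta0 (interior (K (p.2 + 1) p.1)) (K p.2 p.1) f g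
        ≤ ((2 : ℝ) ^ (p.2 + p.1 + 2))⁻¹ :=
          mul_le_of_le_one_right (by positivity) (beta0_le_one hd _ _ _ _)
      _ ≤ ((2 : ℝ) ^ (p.1 + p.2))⁻¹ :=
          inv_anti₀ (by positivity) (pow_le_pow_right₀ one_le_two (by omega))
      _ = (1 / 2 : ℝ) ^ p.1 * (1 / 2) ^ p.2 := by
          rw [pow_add, mul_inv, one_div, inv_pow, inv_pow]
  simpa using eq_zero_of_tsum_tsum_eq_zero h0 hs h n m

end Beta

section Exhaustion

variable {X : Type*} [TopologicalSpace X] {U : ℕ → Set X} {K : ℕ → ℕ → Set X}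

lemma exists_mem_and_interior_subset (hUbasis : TopologicalSpace.IsTopologicalBasis (range U))
    (hKU : ∀ n, ⋃ m, K m n = U n) {O : Set X} (hO : IsOpen O) {x : X} (hx : x ∈ O) :
    ∃ n m, x ∈ K m n ∧ interior (K (m + 1) n) ⊆ O := by
  obtain ⟨_, ⟨n, rfl⟩, hxU, hUO⟩ := hUbasis.exists_subset_of_mem_open hx hO
  rw [← hKU n, mem_iUnion] at hxU
  obtain ⟨m, hxK⟩ := hxU
  have hKU' : K (m + 1) n ⊆ U n := hKU n ▸ subset_iUnion (fun m => K m n) (m + 1)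
  exact ⟨n, m, hxK, interior_subset.trans (hKU'.trans hUO)⟩

lemma subset_of_forall_interior_subset (hUbasis : TopologicalSpace.IsTopologicalBasis (range U))
    (hKsub : ∀ m n, K m n ⊆ interior (K (m + 1) n)) (hKU : ∀ n, ⋃ m, K m n = U n)
    {A B : Set X} (hA : IsOpen A)
    (h : ∀ n m, interior (K (m + 1) n) ⊆ A → interior (K (m + 1) n) ⊆ B) : A ⊆ B := by
  intro x hx
  obtain ⟨n, m, hxK, hWA⟩ := exists_mem_and_interior_subset hUbasis hKU hA hx
  exact h n m hWA (hKsub m n hxK)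

end Exhaustion

theorem stmt11_general {X Y : Type*} [TopologicalSpace X] [MetricSpace Y]
    (U : ℕ → Set X) (K : ℕ → ℕ → Set X)
    (hUbasis : TopologicalSpace.IsTopologicalBasis (Set.range U))
    (hKsub : ∀ m n, K m n ⊆ interior (K (m + 1) n))
    (hKU : ∀ n, ⋃ m, K m n = U n)
    (hd : ∀ y₁ y₂ : Y, dist y₁ y₂ ≤ 1)
    (f g : Cod X Y) (hfg : beta K f g = 0) :
    f.dom = g.dom ∧
      ∀ (x : X) (hf : x ∈ f.dom) (hg : x ∈ g.dom), f.toFun ⟨x, hf⟩ = g.toFun ⟨x, hg⟩ := by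
  have hβ := beta0_eq_zero_of_beta_eq_zero hd hfg
  refine ⟨Subset.antisymm ?_ ?_, fun x hf hg => ?_⟩
  · exact subset_of_forall_interior_subset hUbasis hKsub hKU f.isOpen_dom
      fun n m => (subset_dom_iff_of_beta0_eq_zero (hβ n m)).mp
  · exact subset_of_forall_interior_subset hUbasis hKsub hKU g.isOpen_dom
      fun n m => (subset_dom_iff_of_beta0_eq_zero (hβ n m)).mpr
  obtain ⟨n, m, hxK, hW⟩ :=
    exists_mem_and_interior_subset hUbasis hKU (f.isOpen_dom.inter g.isOpen_dom) ⟨hf, hg⟩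
  have hdK := dK_eq_zero_of_beta0_eq_zero (hβ n m) (hW.trans inter_subset_left)
    (hW.trans inter_subset_right)
  exact dist_le_zero.mp ((dist_le_dK hd f g hxK hf hg).trans_eq hdK)

/-- `β` is a metric on `C_od(X,Y)`: in particular `β(f,g) = 0` implies `f = g`, i.e. the
domains coincide and the functions agree on the common domain. -/
theorem stmt11 {X Y : Type*} [TopologicalSpace X] [LocallyCompactSpace X] [T2Space X]
    [SecondCountableTopology X] [MetricSpace Y]
    (U : ℕ → Set X) (K : ℕ → ℕ → Set X)
    (hUbasis : TopologicalSpace.IsTopologicalBasis (Set.range U))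
    (hUne : ∀ n, (U n).Nonempty)
    (hKcomp : ∀ m n, IsCompact (K m n)) (hKne : ∀ m n, (K m n).Nonempty)
    (hKsub : ∀ m n, K m n ⊆ interior (K (m + 1) n))
    (hKU : ∀ n, ⋃ m, K m n = U n)
    (hd : ∀ y₁ y₂ : Y, dist y₁ y₂ ≤ 1)
    (f g : Cod X Y) (hfg : beta K f g = 0) :
    f.dom = g.dom ∧
      ∀ (x : X) (hf : x ∈ f.dom) (hg : x ∈ g.dom), f.toFun ⟨x, hf⟩ = g.toFun ⟨x, hg⟩ :=
  stmt11_general U K hUbasis hKsub hKU hd f g hfg
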